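/- If Lloyd's algorithm in ℝ starts from a fixed point, it outputs the partition of that fixed point; combined with the fixed-point example, for any a₁ < a₂ < b₁ < b₂ with (a₁ + (a₂+b₁+b₂)/3)/2 < a₂, initializing 2-means with centers a₁, a₂ terminates with partition {{a₁},{a₂,b₁,b₂}}, which differs from {{a₁,a₂},{b₁,b₂}}. -/

import Mathlib

/-! With centers a₁ < a₂, only a₁ lies on a₁'s side of the midpoint, so one Lloyd step moves the
centers to a₁ and c₂ = (a₂ + b₁ + b₂) / 3. The hypothesis says that the new midpoint (a₁ + c₂) / 2
is still below a₂, so the assignment, and with it the centers, does not change again: {a₁, c₂} is a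
fixed point of the Lloyd step, and every later iterate and its partition are those of this fixed
point. -/

open scoped Classical

/-- Nearest-center assignment in ℝ (ties broken toward the smaller center). -/
noncomputable def nearest (C : Finset ℝ) (p : ℝ) : ℝ :=
  WithTop.untopD 0 ((C.filter (fun c => ∀ c' ∈ C, |p - c| ≤ |p - c'|)).min)

/-- One Lloyd iteration on dataset `X`: each center is replaced by the mean of
the data points assigned to it. -/
noncomputable def lloydStep (X : Finset ℝ) (C : Finset ℝ) : Finset ℝ :=
  C.image (fun c =>
    (∑ s ∈ X.filter (fun p => nearest C p = c), s) /
      (X.filter (fun p => nearest C p = c)).card)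

/-- The partition of the dataset `X` induced by nearest-center assignment. -/
noncomputable def partitionOf (X : Finset ℝ) (C : Finset ℝ) : Finset (Finset ℝ) :=
  C.image (fun c => X.filter (fun p => nearest C p = c))

lemma abs_sub_le_abs_sub_iff_le_midpoint {c d p : ℝ} (hcd : c < d) :
    |p - c| ≤ |p - d| ↔ p ≤ (c + d) / 2 := by
  rw [← sq_le_sq]
  constructor <;> intro h <;> nlinarith

lemma nearest_eq_of_closest_of_tie_le {C : Finset ℝ} {c p : ℝ} (hc : c ∈ C)
    (hnear : ∀ c' ∈ C, |p - c| ≤ |p - c'|) (htie : ∀ c' ∈ C, |p - c'| ≤ |p - c| → c ≤ c') :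
    nearest C p = c := by
  set S := C.filter (fun c' => ∀ c'' ∈ C, |p - c'| ≤ |p - c''|)
  have hcS : c ∈ S := Finset.mem_filter.2 ⟨hc, hnear⟩
  have hmin : S.min = c := le_antisymm (Finset.min_le hcS) <| Finset.le_min fun c' hc' =>
    WithTop.coe_le_coe.2 <| htie c' (Finset.mem_filter.1 hc').1 ((Finset.mem_filter.1 hc').2 c hc)
  rw [nearest, hmin, WithTop.untopD_coe]

lemma nearest_pair_of_le_midpoint {c d p : ℝ} (hcd : c < d) (hp : p ≤ (c + d) / 2) :
    nearest {c, d} p = c := by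
  refine nearest_eq_of_closest_of_tie_le (by simp) ?_ ?_ <;>
    simp only [Finset.mem_insert, Finset.mem_singleton, forall_eq_or_imp, forall_eq]
  · exact ⟨le_rfl, (abs_sub_le_abs_sub_iff_le_midpoint hcd).2 hp⟩
  · exact ⟨fun _ => le_rfl, fun _ => hcd.le⟩

lemma nearest_pair_of_midpoint_lt {c d p : ℝ} (hcd : c < d) (hp : (c + d) / 2 < p) :
    nearest {c, d} p = d := by
  have hfar : ¬ |p - c| ≤ |p - d| := (abs_sub_le_abs_sub_iff_le_midpoint hcd).not.2 hp.not_ge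
  refine nearest_eq_of_closest_of_tie_le (by simp) ?_ ?_ <;>
    simp only [Finset.mem_insert, Finset.mem_singleton, forall_eq_or_imp, forall_eq]
  · exact ⟨(not_le.1 hfar).le, le_rfl⟩
  · exact ⟨fun h => absurd h hfar, fun _ => le_rfl⟩

noncomputable def cluster (X C : Finset ℝ) (c : ℝ) : Finset ℝ :=
  X.filter (fun p => nearest C p = c)

noncomputable def mean (A : Finset ℝ) : ℝ :=
  (∑ s ∈ A, s) / A.card

lemma cluster_pair_left (X : Finset ℝ) {c d : ℝ} (hcd : c < d) :
    cluster X {c, d} c = X.filter (· ≤ (c + d) / 2) := by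
  refine Finset.filter_congr fun p _ => ⟨fun h => ?_, nearest_pair_of_le_midpoint hcd⟩
  by_contra hp
  rw [nearest_pair_of_midpoint_lt hcd (not_le.1 hp)] at h
  exact hcd.ne' h

lemma cluster_pair_right (X : Finset ℝ) {c d : ℝ} (hcd : c < d) :
    cluster X {c, d} d = X.filter ((c + d) / 2 < ·) := by
  refine Finset.filter_congr fun p _ => ⟨fun h => ?_, nearest_pair_of_midpoint_lt hcd⟩
  by_contra hp
  rw [nearest_pair_of_le_midpoint hcd (not_lt.1 hp)] at h
  exact hcd.ne h

lemma lloydStep_pair (X : Finset ℝ) (c d : ℝ) :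
    lloydStep X {c, d} = {mean (cluster X {c, d} c), mean (cluster X {c, d} d)} := by
  rw [lloydStep, Finset.image_insert, Finset.image_singleton]
  rfl

lemma partitionOf_pair (X : Finset ℝ) (c d : ℝ) :
    partitionOf X {c, d} = {cluster X {c, d} c, cluster X {c, d} d} := by
  rw [partitionOf, Finset.image_insert, Finset.image_singleton]
  rfl

lemma filter_insert_of_le_of_forall_lt {a m : ℝ} {Y : Finset ℝ} (ha : a ≤ m)
    (hY : ∀ y ∈ Y, m < y) :
    (insert a Y).filter (· ≤ m) = {a} ∧ (insert a Y).filter (m < ·) = Y := by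
  rw [Finset.filter_insert, Finset.filter_insert, if_pos ha, if_neg ha.not_gt,
    Finset.filter_false_of_mem fun y hy => (hY y hy).not_ge, Finset.filter_true_of_mem hY]
  exact ⟨rfl, rfl⟩

lemma mean_singleton (a : ℝ) : mean {a} = a := by
  simp [mean]

lemma mean_triple {x y z : ℝ} (hxy : x ≠ y) (hxz : x ≠ z) (hyz : y ≠ z) :
    mean {x, y, z} = (x + y + z) / 3 := by
  rw [mean, Finset.sum_insert (by simp [hxy, hxz]), Finset.sum_pair hyz,
    Finset.card_insert_of_notMem (by simp [hxy, hxz]), Finset.card_pair hyz]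
  norm_num [add_assoc]

lemma iterate_eq_of_map_eq_of_isFixedPt {α : Type*} {f : α → α} {x y : α} (hx : f x = y)
    (hy : Function.IsFixedPt f y) {n : ℕ} (hn : 1 ≤ n) : f^[n] x = y := by
  obtain ⟨m, rfl⟩ := Nat.exists_eq_add_of_le' hn
  rw [Function.iterate_succ_apply, hx, hy.iterate m]

lemma lloydStep_pair_of_split {a c d : ℝ} {Y : Finset ℝ} (hcd : c < d) (ha : a ≤ (c + d) / 2)
    (hY : ∀ y ∈ Y, (c + d) / 2 < y) :
    lloydStep (insert a Y) {c, d} = {a, mean Y} ∧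
      partitionOf (insert a Y) {c, d} = {{a}, Y} := by
  obtain ⟨hleft, hright⟩ := filter_insert_of_le_of_forall_lt ha hY
  rw [lloydStep_pair, partitionOf_pair, cluster_pair_left _ hcd, cluster_pair_right _ hcd,
    hleft, hright, mean_singleton]
  exact ⟨rfl, rfl⟩

/-- for a₁ < a₂ < b₁ < b₂ with (a₁ + (a₂+b₁+b₂)/3)/2 < a₂,
2-means initialized with centers a₁, a₂ reaches after one step the fixed
point with centers a₁, (a₂+b₁+b₂)/3, stays there forever, and terminates
with partition {{a₁},{a₂,b₁,b₂}}, which differs from {{a₁,a₂},{b₁,b₂}}. -/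
theorem stmt_17 (a₁ a₂ b₁ b₂ : ℝ) (h1 : a₁ < a₂) (h2 : a₂ < b₁) (h3 : b₁ < b₂)
    (hmid : (a₁ + (a₂ + b₁ + b₂) / 3) / 2 < a₂) :
    ∀ X : Finset ℝ, X = {a₁, a₂, b₁, b₂} →
    ∀ c₂ : ℝ, c₂ = (a₂ + b₁ + b₂) / 3 →
      (∀ n : ℕ, 1 ≤ n → (lloydStep X)^[n] {a₁, a₂} = {a₁, c₂}) ∧
      (∀ n : ℕ, 1 ≤ n →
        partitionOf X ((lloydStep X)^[n] {a₁, a₂}) =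
          ({({a₁} : Finset ℝ), ({a₂, b₁, b₂} : Finset ℝ)} : Finset (Finset ℝ))) ∧
      ({({a₁} : Finset ℝ), ({a₂, b₁, b₂} : Finset ℝ)} : Finset (Finset ℝ)) ≠
        {({a₁, a₂} : Finset ℝ), ({b₁, b₂} : Finset ℝ)} := by
  rintro X rfl c₂ hc₂
  rw [← hc₂] at hmid
  have ha₂c₂ : a₂ < c₂ := by linarith
  have hY : ∀ m < a₂, ∀ y ∈ ({a₂, b₁, b₂} : Finset ℝ), m < y := by
    intro m hm
    simp only [Finset.mem_insert, Finset.mem_singleton, forall_eq_or_imp, forall_eq]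
    exact ⟨hm, by linarith, by linarith⟩
  have hmean : mean {a₂, b₁, b₂} = c₂ := by
    rw [mean_triple h2.ne (by linarith) h3.ne, hc₂]
  obtain ⟨hstep, -⟩ := lloydStep_pair_of_split (a := a₁) h1 (by linarith) (hY _ (by linarith))
  obtain ⟨hfix, hpart⟩ :=
    lloydStep_pair_of_split (a := a₁) (h1.trans ha₂c₂) (by linarith) (hY _ hmid)
  rw [hmean] at hstep hfix
  have hiter (n : ℕ) (hn : 1 ≤ n) := iterate_eq_of_map_eq_of_isFixedPt hstep hfix hn
  refine ⟨hiter, fun n hn => by rw [hiter n hn, hpart], fun h => ?_⟩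
  have hmem : {a₁} ∈ ({{a₁, a₂}, {b₁, b₂}} : Finset (Finset ℝ)) := h ▸ by simp
  obtain hpair | hpair : {a₁} = {a₁, a₂} ∨ {a₁} = {b₁, b₂} := by simpa using hmem
  · simpa [Finset.card_pair h1.ne] using congrArg Finset.card hpair
  · simpa [Finset.card_pair h3.ne] using congrArg Finset.card hpair
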